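/- After Alice and each of the p Bobs coherently compute into ancillas the parity of their left and right qubits of |g^{p+1}(x;y)⟩_L ⊗ |g^{p+1}(z;w)⟩_R, the resulting state equals (1/√2) Σ_{r∈{0,1}} |r⟩_P (−1)^{w·r} |x ⊕ r^p ⊕ z⟩ ⊗ |g^{2p+2}(x r (r^p ⊕ z); y ⊕ w)⟩, where r^p denotes the bit r repeated p times and x r (r^p ⊕ z) is the concatenation of x, r, and r^p ⊕ z. In particular, all p+1 parity registers hold the same value r, and the Bobs' parity outcomes all agree with Alice's if and only if x = z. -/

import Mathlib

/-!
Write `|g^{p+1}(x;y)⟩ = 2^{-1/2} Σ_b (−1)^{y b} |b, x ⊕ b^p⟩`. On the branch pair `(b, c)` of the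
two GHZ states the CNOTs write the bitwise XOR `(b ⊕ c, x ⊕ (b ⊕ c)^p ⊕ z)` into the ancillas, which
depends only on `r = b ⊕ c`. Reindexing the double sum by `(r, b)` and splitting the sign
`(−1)^{y b + w c} = (−1)^{w r} (−1)^{(y ⊕ w) b}` leaves, for each `r`, the state
`|g^{2p+2}(x r (r^p ⊕ z); y ⊕ w)⟩` on the two GHZ registers. The ancilla string is constant iff
`x = z`.
-/

/-- `(−1)^b` for a bit `b`. -/
def sgn (b : Bool) : ℂ := if b then -1 else 1

/-- Amplitudes of the GHZ state `|g^{p+1}(x;y)⟩ = (1/√2)(|0,x⟩ + (−1)^y |1,x̄⟩)`. -/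
noncomputable def ghzAmp (p : ℕ) (x : Fin p → Bool) (y : Bool) :
    (Fin (p + 1) → Bool) → ℂ := fun s =>
  (Real.sqrt 2)⁻¹ *
    ((if s = Fin.cons false x then 1 else 0) +
      sgn y * (if s = Fin.cons true (fun i => !x i) then 1 else 0))

/-- The initial state: all `p+1` parity ancillas in `|0⟩`, together with
`|g^{p+1}(x;y)⟩_L |g^{p+1}(z;w)⟩_R`.  Party `j` holds qubit `j` of each of `L` and `R`
(`j = 0` is Alice, `j ≥ 1` the Bobs). -/
noncomputable def initState (p : ℕ) (x z : Fin p → Bool) (y w : Bool) :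
    (Fin (p + 1) → Bool) × (Fin (p + 1) → Bool) × (Fin (p + 1) → Bool) → ℂ := fun s =>
  (if s.1 = fun _ => false then 1 else 0) * ghzAmp p x y s.2.1 * ghzAmp p z w s.2.2

/-- Each party coherently computes, into its own ancilla, the parity (XOR) of its Left
and Right qubits. -/
def parityCNOTs {p : ℕ}
    (ψ : (Fin (p + 1) → Bool) × (Fin (p + 1) → Bool) × (Fin (p + 1) → Bool) → ℂ) :
    (Fin (p + 1) → Bool) × (Fin (p + 1) → Bool) × (Fin (p + 1) → Bool) → ℂ := fun s =>
  ψ (fun j => xor (s.1 j) (xor (s.2.1 j) (s.2.2 j)), s.2.1, s.2.2)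

open Finset

/-- `|b, x ⊕ b^p⟩`, the branch of `|g^{p+1}(x;·)⟩` whose first qubit is `b`. -/
def ghzBranch {p : ℕ} (b : Bool) (x : Fin p → Bool) : Fin (p + 1) → Bool :=
  Fin.cons b fun i => b ^^ x i

lemma sgn_xor (a b : Bool) : sgn (a ^^ b) = sgn a * sgn b := by
  cases a <;> cases b <;> simp [sgn]

lemma sgn_false : sgn false = 1 := rfl

lemma ghzBranch_false {p : ℕ} (x : Fin p → Bool) : ghzBranch false x = Fin.cons false x := by
  simp [ghzBranch]

lemma ghzBranch_true {p : ℕ} (x : Fin p → Bool) :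
    ghzBranch true x = Fin.cons true fun i => !x i := by
  simp [ghzBranch]

lemma ghzBranch_not {p : ℕ} (b : Bool) (x : Fin p → Bool) :
    ghzBranch (!b) x = Fin.cons (!b) fun i => !(b ^^ x i) := by
  simp [ghzBranch]

lemma ghzAmp_eq_sum (p : ℕ) (x : Fin p → Bool) (y : Bool) (s : Fin (p + 1) → Bool) :
    ghzAmp p x y s = (√2)⁻¹ * ∑ b, sgn (y && b) * if s = ghzBranch b x then 1 else 0 := by
  simp [ghzAmp, ghzBranch, sgn_false, add_comm]

lemma ghzBranch_xor {p : ℕ} (b c : Bool) (x z : Fin p → Bool) :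
    (fun j => ghzBranch b x j ^^ ghzBranch c z j) =
      Fin.cons (b ^^ c) fun i => x i ^^ ((b ^^ c) ^^ z i) := by
  funext j
  refine Fin.cases ?_ (fun i => ?_) j <;>
    simp only [ghzBranch, Fin.cons_zero, Fin.cons_succ, Bool.xor_assoc, Bool.xor_left_comm]

lemma xor_eq_const_false_iff {ι : Type*} (a g : ι → Bool) :
    ((fun j => a j ^^ g j) = fun _ => false) ↔ a = g := by
  simp only [funext_iff, bne_eq_false_iff_eq]

lemma parityCNOTs_initState_eq_sum_branches (p : ℕ) (x z : Fin p → Bool) (y w : Bool)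
    (a l r : Fin (p + 1) → Bool) :
    parityCNOTs (initState p x z y w) (a, l, r) =
      (√2)⁻¹ * (√2)⁻¹ * ∑ b, ∑ c, sgn (y && b) * sgn (w && c) *
        ((if a = Fin.cons (b ^^ c) (fun i => x i ^^ ((b ^^ c) ^^ z i)) then 1 else 0) *
          if l = ghzBranch b x ∧ r = ghzBranch c z then 1 else 0) := by
  rw [parityCNOTs, initState, ghzAmp_eq_sum, ghzAmp_eq_sum, mul_assoc, mul_sum, mul_sum,
    sum_mul_sum]
  simp only [xor_eq_const_false_iff, mul_sum]
  refine sum_congr rfl fun b _ => sum_congr rfl fun c _ => ?_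
  by_cases hl : l = ghzBranch b x
  · by_cases hr : r = ghzBranch c z
    · subst hl hr
      simp only [ghzBranch_xor, and_self, if_true]
      ring
    · simp [hr]
  · simp [hl]

lemma sum_sum_bool_xor {M : Type*} [AddCommMonoid M] (f : Bool → Bool → M) :
    ∑ b, ∑ c, f b c = ∑ r, ∑ b, f b (b ^^ r) := by
  simp only [Fintype.sum_bool, Bool.xor_true, Bool.xor_false, Bool.not_true, Bool.not_false]
  abel

lemma sgn_and_mul_sgn_and_xor (y w b r : Bool) :
    sgn (y && b) * sgn (w && (b ^^ r)) = sgn (w && r) * sgn ((y ^^ w) && b) := by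
  rw [Bool.and_xor_distrib_left, Bool.and_xor_distrib_right, sgn_xor, sgn_xor]
  ring

lemma parityCNOTs_initState_eq_sum_parity (p : ℕ) (x z : Fin p → Bool) (y w : Bool)
    (a l r : Fin (p + 1) → Bool) :
    parityCNOTs (initState p x z y w) (a, l, r) =
      (√2)⁻¹ * ∑ rb, (if a = Fin.cons rb (fun i => x i ^^ (rb ^^ z i)) then 1 else 0) *
        sgn (w && rb) * ((√2)⁻¹ * ∑ b, sgn ((y ^^ w) && b) *
          if l = ghzBranch b x ∧ r = ghzBranch (b ^^ rb) z then 1 else 0) := by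
  rw [parityCNOTs_initState_eq_sum_branches, sum_sum_bool_xor]
  simp only [mul_sum]
  refine sum_congr rfl fun rb _ => sum_congr rfl fun b _ => ?_
  simp only [← Bool.xor_assoc, Bool.xor_self, Bool.false_xor]
  rw [sgn_and_mul_sgn_and_xor]
  ring

/-- After all parties compute their parities, the state equals
`(1/√2) Σ_{r∈{0,1}} |r⟩_P (−1)^{w·r} |x ⊕ r^p ⊕ z⟩ ⊗ |g^{2p+2}(x r (r^p⊕z); y⊕w)⟩`;
and the Bobs' parity outcomes all agree with Alice's iff `x = z`. -/
theorem stmt_12 (p : ℕ) (x z : Fin p → Bool) (y w : Bool) :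
    (parityCNOTs (initState p x z y w) = fun s =>
      (Real.sqrt 2)⁻¹ *
        ∑ rb : Bool,
          (if s.1 = Fin.cons rb (fun i => xor (x i) (xor rb (z i))) then 1 else 0) *
            sgn (w && rb) *
            ((Real.sqrt 2)⁻¹ *
              ((if s.2.1 = Fin.cons false x ∧
                  s.2.2 = Fin.cons rb (fun i => xor rb (z i)) then 1 else 0) +
                sgn (xor y w) *
                  (if s.2.1 = Fin.cons true (fun i => !x i) ∧
                      s.2.2 = Fin.cons (!rb) (fun i => !(xor rb (z i))) then 1 else 0)))) ∧
    ∀ rb : Bool, ((fun i : Fin p => xor (x i) (xor rb (z i))) = fun _ => rb) ↔ x = z := by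
  refine ⟨funext fun ⟨a, l, r⟩ => ?_, fun rb => ?_⟩
  · rw [parityCNOTs_initState_eq_sum_parity]
    refine congrArg _ (sum_congr rfl fun rb _ => ?_)
    rw [Fintype.sum_bool, Bool.and_true, Bool.and_false, sgn_false, Bool.false_xor,
      Bool.true_xor, ghzBranch_false, ghzBranch_true, ghzBranch_not, ghzBranch]
    ring
  · rw [funext_iff, funext_iff]
    exact forall_congr' fun i => by cases rb <;> simp
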